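/- arXiv:2401.01086 — 5 statements merged into one kernel-verified Lean document; each statement's English description precedes it below -/
import Mathlib

section
/- Let μ and ν be finite positive Borel measures on ℝ^d satisfying Assumption 1. Then the infimum of φ⁺(ℝ^d) + φ⁻(ℝ^d) over all pairs (φ⁺, φ⁻) of finite positive Borel measures on ℝ^d with all moments finite satisfying φ⁺ − φ⁻ = μ − ν and, for all n ∈ ℕ, M_n(φ⁺) ⪯ M_n(μ) and M_n(φ⁻) ⪯ M_n(ν), equals ‖μ − ν‖_TV, and it is attained uniquely at the Hahn–Jordan decomposition (φ⁺*, φ⁻*) of μ − ν. -/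
/-!
The Hahn–Jordan decomposition is the minimal one: whenever `φ⁺ - φ⁻ = μ - ν` with `φ⁺, φ⁻ ≥ 0`,
restricting to a Hahn positive set shows `φ⁺* ≤ φ⁺`, and symmetrically `φ⁻* ≤ φ⁻`. This gives the
lower bound, and equality of total masses then forces `φ⁺ = φ⁺*`, `φ⁻ = φ⁻*`. The decomposition is
feasible since `φ⁺* ≤ μ`, `φ⁻* ≤ ν`, and for `σ ≤ ρ` the matrix `M_n(ρ) - M_n(σ) = M_n(ρ - σ)` is
the moment matrix of a positive measure, hence positive semidefinite.
-/

open MeasureTheory Finset Filter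

noncomputable section

/-- The monomial `x ↦ x^α`. -/
def mono (d : ℕ) (α : Fin d → ℕ) (x : Fin d → ℝ) : ℝ := ∏ i, x i ^ α i

/-- All moments of `μ` are finite. -/
def HasAllMoments {d : ℕ} (μ : Measure (Fin d → ℝ)) : Prop :=
  ∀ α : Fin d → ℕ, Integrable (mono d α) μ

/-- The moment `μ_α = ∫ x^α dμ`. -/
def mMom {d : ℕ} (μ : Measure (Fin d → ℝ)) (α : Fin d → ℕ) : ℝ := ∫ x, mono d α x ∂μ

instance fintypeIdx (d n : ℕ) : Fintype {α : Fin d → ℕ // ∑ i, α i ≤ n} :=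
  Fintype.ofInjective
    (fun a => (fun i => (⟨a.1 i,
        Nat.lt_succ_of_le (le_trans
          (Finset.single_le_sum (fun j _ => Nat.zero_le (a.1 j)) (Finset.mem_univ i)) a.2)⟩ :
        Fin (n+1))) : _ → (Fin d → Fin (n+1)))
    (fun a b h => by
      apply Subtype.ext
      funext i
      exact congrArg Fin.val (congrFun h i))

/-- Moment matrix of order `n` built from a moment function `m`. -/
def momMat (d n : ℕ) (m : (Fin d → ℕ) → ℝ) :
    Matrix {α : Fin d → ℕ // ∑ i, α i ≤ n} {α : Fin d → ℕ // ∑ i, α i ≤ n} ℝ :=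
  fun a b => m (a.1 + b.1)

/-- Carleman's condition. -/
def Carleman {d : ℕ} (μ : Measure (Fin d → ℝ)) : Prop :=
  ∀ i : Fin d, ¬ Summable (fun j : ℕ =>
    (∫ x, x i ^ (2 * (j + 1)) ∂μ) ^ (-(1 : ℝ) / (2 * (j + 1) : ℝ)))

/-- Positive part of the Hahn–Jordan decomposition of `μ - ν`. -/
def hjPos {d : ℕ} (μ ν : Measure (Fin d → ℝ)) [IsFiniteMeasure μ] [IsFiniteMeasure ν] :
    Measure (Fin d → ℝ) :=
  (μ.toSignedMeasure - ν.toSignedMeasure).toJordanDecomposition.posPart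

/-- Negative part of the Hahn–Jordan decomposition of `μ - ν`. -/
def hjNeg {d : ℕ} (μ ν : Measure (Fin d → ℝ)) [IsFiniteMeasure μ] [IsFiniteMeasure ν] :
    Measure (Fin d → ℝ) :=
  (μ.toSignedMeasure - ν.toSignedMeasure).toJordanDecomposition.negPart

/-- Total variation distance `‖μ - ν‖_TV` (as a real number). -/
def tvReal {d : ℕ} (μ ν : Measure (Fin d → ℝ)) [IsFiniteMeasure μ] [IsFiniteMeasure ν] : ℝ :=
  (hjPos μ ν Set.univ + hjNeg μ ν Set.univ).toReal

/-- Degree-`2n` pseudo-moment vectors. -/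
abbrev PV (d n : ℕ) := {α : Fin d → ℕ // ∑ i, α i ≤ 2 * n} → ℝ

/-- Moment matrix of a degree-`2n` pseudo-moment vector. -/
def pvMat (d n : ℕ) (φ : PV d n) :
    Matrix {α : Fin d → ℕ // ∑ i, α i ≤ n} {α : Fin d → ℕ // ∑ i, α i ≤ n} ℝ :=
  fun a b => φ ⟨a.1 + b.1, by
    have h : ∑ i, (a.1 + b.1) i = (∑ i, a.1 i) + ∑ i, b.1 i := by
      simp [Finset.sum_add_distrib]
    have ha := a.2
    have hb := b.2
    omega⟩

/-- The index `α = 0`. -/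
def zeroIdx (d n : ℕ) : {α : Fin d → ℕ // ∑ i, α i ≤ 2 * n} := ⟨0, by simp⟩

/-- Feasibility for the level-`n` semidefinite relaxation. -/
def Feas (d n : ℕ) (μ ν : Measure (Fin d → ℝ)) (φ ψ : PV d n) : Prop :=
  (∀ α, φ α - ψ α = mMom μ α.1 - mMom ν α.1) ∧
  (pvMat d n φ).PosSemidef ∧ (momMat d n (mMom μ) - pvMat d n φ).PosSemidef ∧
  (pvMat d n ψ).PosSemidef ∧ (momMat d n (mMom ν) - pvMat d n ψ).PosSemidef

/-- Values of the level-`n` semidefinite relaxation. -/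
def primalSet (d n : ℕ) (μ ν : Measure (Fin d → ℝ)) : Set ℝ :=
  {r | ∃ φ ψ : PV d n, Feas d n μ ν φ ψ ∧ r = φ (zeroIdx d n) + ψ (zeroIdx d n)}

/-- The optimal value `ρ_n` of the level-`n` semidefinite relaxation. -/
def rho (d n : ℕ) (μ ν : Measure (Fin d → ℝ)) : ℝ := sInf (primalSet d n μ ν)


/-- Assumption 1: all moments of `μ` and `ν` are finite, and there is `c > 0` with
`∫ exp(c|x_i|) dμ < ∞` and `∫ exp(c|x_i|) dν < ∞` for every coordinate `i`. -/
def Assumption1 {d : ℕ} (μ ν : Measure (Fin d → ℝ)) : Prop :=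
  HasAllMoments μ ∧ HasAllMoments ν ∧
  ∃ c : ℝ, 0 < c ∧ (∀ i : Fin d, Integrable (fun x => Real.exp (c * |x i|)) μ) ∧
    (∀ i : Fin d, Integrable (fun x => Real.exp (c * |x i|)) ν)

open scoped ENNReal

namespace MeasureTheory

variable {α : Type*} [MeasurableSpace α]

theorem Measure.toSignedMeasure_sub_eq_sub_iff {μ ν φp φm : Measure α} [IsFiniteMeasure μ]
    [IsFiniteMeasure ν] [IsFiniteMeasure φp] [IsFiniteMeasure φm] :
    φp.toSignedMeasure - φm.toSignedMeasure = μ.toSignedMeasure - ν.toSignedMeasure ↔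
      φp + ν = φm + μ := by
  rw [sub_eq_sub_iff_add_eq_add, add_comm μ.toSignedMeasure, ← Measure.toSignedMeasure_add,
    ← Measure.toSignedMeasure_add, Measure.toSignedMeasure_eq_toSignedMeasure_iff]

-- On the Hahn positive set `i`, `s = φp - φm ≤ φp`.
theorem SignedMeasure.toJordanDecomposition_posPart_le {s : SignedMeasure α}
    {φp φm : Measure α} [IsFiniteMeasure φp] [IsFiniteMeasure φm]
    (h : s = φp.toSignedMeasure - φm.toSignedMeasure) :
    s.toJordanDecomposition.posPart ≤ φp := by
  obtain ⟨i, hi, hpos, -, hposPart, -⟩ := s.toJordanDecomposition_spec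
  refine Measure.le_iff.2 fun A hA => ?_
  rw [← ENNReal.toReal_le_toReal (measure_ne_top _ _) (measure_ne_top _ _)]
  change s.toJordanDecomposition.posPart.real A ≤ φp.real A
  rw [hposPart, SignedMeasure.toMeasureOfZeroLE_real_apply _ hpos hi hA, h,
    Measure.toSignedMeasure_sub_apply (hi.inter hA)]
  calc φp.real (i ∩ A) - φm.real (i ∩ A) ≤ φp.real (i ∩ A) := sub_le_self _ measureReal_nonneg
    _ ≤ φp.real A := measureReal_mono Set.inter_subset_right

theorem SignedMeasure.toJordanDecomposition_negPart_le {s : SignedMeasure α}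
    {φp φm : Measure α} [IsFiniteMeasure φp] [IsFiniteMeasure φm]
    (h : s = φp.toSignedMeasure - φm.toSignedMeasure) :
    s.toJordanDecomposition.negPart ≤ φm := by
  rw [← JordanDecomposition.neg_posPart, ← SignedMeasure.toJordanDecomposition_neg]
  exact SignedMeasure.toJordanDecomposition_posPart_le (by rw [h, neg_sub])

theorem ENNReal.eq_and_eq_of_le_of_le_of_add_eq_add {a b c d : ℝ≥0∞} (hac : a ≤ c) (hbd : b ≤ d)
    (hab : a + b ≠ ∞) (h : c + d = a + b) : a = c ∧ b = d := by
  obtain ⟨hc, hd⟩ := ENNReal.add_ne_top.1 (h ▸ hab)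
  refine ⟨le_antisymm hac <| ENNReal.le_of_add_le_add_right hd ?_,
    le_antisymm hbd <| ENNReal.le_of_add_le_add_left hc ?_⟩
  · exact h.trans_le (add_le_add_right hbd a)
  · exact h.trans_le (add_le_add_left hac b)

theorem Measure.eq_and_eq_of_le_of_le_of_measure_univ_add_eq {ρ₁ ρ₂ σ₁ σ₂ : Measure α}
    [IsFiniteMeasure ρ₁] [IsFiniteMeasure ρ₂] (h₁ : ρ₁ ≤ σ₁) (h₂ : ρ₂ ≤ σ₂)
    (h : σ₁ Set.univ + σ₂ Set.univ = ρ₁ Set.univ + ρ₂ Set.univ) : ρ₁ = σ₁ ∧ ρ₂ = σ₂ := by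
  obtain ⟨e₁, e₂⟩ := ENNReal.eq_and_eq_of_le_of_le_of_add_eq_add (h₁ _) (h₂ _)
    (ENNReal.add_ne_top.2 ⟨measure_ne_top _ _, measure_ne_top _ _⟩) h
  exact ⟨Measure.eq_of_le_of_measure_univ_eq h₁ e₁, Measure.eq_of_le_of_measure_univ_eq h₂ e₂⟩

end MeasureTheory

section Moments

open scoped Matrix

variable {d : ℕ}

theorem mono_add (α β : Fin d → ℕ) (x : Fin d → ℝ) :
    mono d (α + β) x = mono d α x * mono d β x := by
  simp only [mono, Pi.add_apply, pow_add, Finset.prod_mul_distrib]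

theorem HasAllMoments.mono_measure {ρ σ : Measure (Fin d → ℝ)} (hρ : HasAllMoments ρ)
    (hσ : σ ≤ ρ) : HasAllMoments σ :=
  fun α => (hρ α).mono_measure hσ

theorem mMom_sub_of_le {ρ σ : Measure (Fin d → ℝ)} [IsFiniteMeasure σ] (hρ : HasAllMoments ρ)
    (hσ : σ ≤ ρ) (α : Fin d → ℕ) : mMom (ρ - σ) α = mMom ρ α - mMom σ α := by
  have h := integral_add_measure (hρ.mono_measure (Measure.sub_le (ν := σ)) α)
    (hρ.mono_measure hσ α)
  rw [Measure.sub_add_cancel_of_le hσ] at h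
  rw [mMom, mMom, mMom, h, add_sub_cancel_right]

theorem momMat_sub (n : ℕ) (m₁ m₂ : (Fin d → ℕ) → ℝ) :
    momMat d n (m₁ - m₂) = momMat d n m₁ - momMat d n m₂ :=
  rfl

theorem momMat_isHermitian (n : ℕ) (m : (Fin d → ℕ) → ℝ) : (momMat d n m).IsHermitian := by
  ext a b
  simp only [Matrix.conjTranspose_apply, star_trivial, momMat, add_comm]

theorem dotProduct_momMat_mMom_mulVec (n : ℕ) {ρ : Measure (Fin d → ℝ)} (hρ : HasAllMoments ρ)
    (c : {α : Fin d → ℕ // ∑ i, α i ≤ n} → ℝ) :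
    c ⬝ᵥ (momMat d n (mMom ρ) *ᵥ c) = ∫ x, (∑ a, c a * mono d a.1 x) ^ 2 ∂ρ := by
  have hsq : ∀ x, (∑ a, c a * mono d a.1 x) ^ 2 = ∑ a, ∑ b, c a * c b * mono d (a.1 + b.1) x := by
    intro x
    rw [sq, Finset.sum_mul_sum]
    refine Finset.sum_congr rfl fun a _ => Finset.sum_congr rfl fun b _ => ?_
    rw [mono_add]; ring
  simp only [hsq]
  rw [integral_finsetSum _ fun a _ => integrable_finsetSum _ fun b _ =>
    (hρ (a.1 + b.1)).const_mul (c a * c b)]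
  simp only [integral_finsetSum _ fun b _ => (hρ (_ + b.1)).const_mul (c _ * c b),
    integral_const_mul, dotProduct, Matrix.mulVec, momMat, mMom, Finset.mul_sum]
  refine Finset.sum_congr rfl fun a _ => Finset.sum_congr rfl fun b _ => ?_
  ring

theorem momMat_mMom_posSemidef (n : ℕ) {ρ : Measure (Fin d → ℝ)} (hρ : HasAllMoments ρ) :
    (momMat d n (mMom ρ)).PosSemidef := by
  refine Matrix.posSemidef_iff_dotProduct_mulVec.2 ⟨momMat_isHermitian n _, fun c => ?_⟩
  rw [star_trivial, dotProduct_momMat_mMom_mulVec n hρ]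
  exact integral_nonneg fun x => sq_nonneg _

theorem momMat_sub_momMat_posSemidef_of_le (n : ℕ) {ρ σ : Measure (Fin d → ℝ)} [IsFiniteMeasure σ]
    (hρ : HasAllMoments ρ) (hσ : σ ≤ ρ) :
    (momMat d n (mMom ρ) - momMat d n (mMom σ)).PosSemidef := by
  have h : mMom ρ - mMom σ = mMom (ρ - σ) := funext fun α => (mMom_sub_of_le hρ hσ α).symm
  rw [← momMat_sub, h]
  exact momMat_mMom_posSemidef n (hρ.mono_measure Measure.sub_le)

end Moments

section HahnJordan

variable {d : ℕ} (μ ν : Measure (Fin d → ℝ)) [IsFiniteMeasure μ] [IsFiniteMeasure ν]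

instance : IsFiniteMeasure (hjPos μ ν) := JordanDecomposition.posPart_finite _

instance : IsFiniteMeasure (hjNeg μ ν) := JordanDecomposition.negPart_finite _

theorem hjPos_add_eq_hjNeg_add : hjPos μ ν + ν = hjNeg μ ν + μ :=
  Measure.toSignedMeasure_sub_eq_sub_iff.1 (SignedMeasure.toSignedMeasure_toJordanDecomposition _)

theorem hjPos_le_and_hjNeg_le {φp φm : Measure (Fin d → ℝ)} [IsFiniteMeasure φp]
    [IsFiniteMeasure φm] (h : φp + ν = φm + μ) : hjPos μ ν ≤ φp ∧ hjNeg μ ν ≤ φm := by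
  have hs := (Measure.toSignedMeasure_sub_eq_sub_iff.2 h).symm
  exact ⟨SignedMeasure.toJordanDecomposition_posPart_le hs,
    SignedMeasure.toJordanDecomposition_negPart_le hs⟩

end HahnJordan

/-- Under Assumption 1, the infimum of `φ⁺(ℝ^d) + φ⁻(ℝ^d)` over pairs of finite
positive measures with all moments finite, `φ⁺ - φ⁻ = μ - ν`, and moment-matrix dominations
`M_n(φ⁺) ⪯ M_n(μ)`, `M_n(φ⁻) ⪯ M_n(ν)` for all `n`, equals `‖μ - ν‖_TV`, attained uniquely
at the Hahn–Jordan decomposition of `μ - ν`. -/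
theorem tv_eq_inf_momentMatrix_dominated (d : ℕ) (μ ν : Measure (Fin d → ℝ))
    [IsFiniteMeasure μ] [IsFiniteMeasure ν] (hA : Assumption1 μ ν) :
    IsLeast {r : ℝ≥0∞ | ∃ φp φm : Measure (Fin d → ℝ),
        IsFiniteMeasure φp ∧ IsFiniteMeasure φm ∧
        HasAllMoments φp ∧ HasAllMoments φm ∧ φp + ν = φm + μ ∧
        (∀ n : ℕ, (momMat d n (mMom μ) - momMat d n (mMom φp)).PosSemidef) ∧
        (∀ n : ℕ, (momMat d n (mMom ν) - momMat d n (mMom φm)).PosSemidef) ∧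
        r = φp Set.univ + φm Set.univ}
      (hjPos μ ν Set.univ + hjNeg μ ν Set.univ) ∧
    (∀ φp φm : Measure (Fin d → ℝ), IsFiniteMeasure φp → IsFiniteMeasure φm →
      HasAllMoments φp → HasAllMoments φm → φp + ν = φm + μ →
      (∀ n : ℕ, (momMat d n (mMom μ) - momMat d n (mMom φp)).PosSemidef) →
      (∀ n : ℕ, (momMat d n (mMom ν) - momMat d n (mMom φm)).PosSemidef) →
      φp Set.univ + φm Set.univ = hjPos μ ν Set.univ + hjNeg μ ν Set.univ →
      φp = hjPos μ ν ∧ φm = hjNeg μ ν) := by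
  obtain ⟨hμ, hν, -⟩ := hA
  obtain ⟨hPμ, hNν⟩ := hjPos_le_and_hjNeg_le μ ν (add_comm μ ν)
  refine ⟨⟨⟨hjPos μ ν, hjNeg μ ν, inferInstance, inferInstance, hμ.mono_measure hPμ,
    hν.mono_measure hNν, hjPos_add_eq_hjNeg_add μ ν,
    fun n => momMat_sub_momMat_posSemidef_of_le n hμ hPμ,
    fun n => momMat_sub_momMat_posSemidef_of_le n hν hNν, rfl⟩, ?_⟩, ?_⟩
  · rintro r ⟨φp, φm, _, _, -, -, hφ, -, -, rfl⟩
    obtain ⟨hp, hm⟩ := hjPos_le_and_hjNeg_le μ ν hφ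
    exact add_le_add (hp Set.univ) (hm Set.univ)
  · intro φp φm _ _ _ _ hφ _ _ huniv
    obtain ⟨hp, hm⟩ := hjPos_le_and_hjNeg_le μ ν hφ
    obtain ⟨ep, em⟩ := Measure.eq_and_eq_of_le_of_le_of_measure_univ_add_eq hp hm huniv
    exact ⟨ep.symm, em.symm⟩

end
end

section
/- Let μ be a finite positive Borel measure on ℝ^d with all moments finite, let n ∈ ℕ, and let φ = (φ_α)_{|α| ≤ 2n} be a degree-2n pseudo-moment vector with 0 ⪯ M_n(φ) ⪯ M_n(μ). Then |φ_α| ≤ max( μ(ℝ^d), max_{i=1,…,d} ∫ x_i^{2n} dμ ) for every α ∈ ℕ^d with |α| ≤ 2n. -/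
open MeasureTheory Finset Filter

noncomputable section

/-!
Write `α = β + γ` with `|β|, |γ| ≤ n`. Then `φ_α` is the `(β, γ)` entry of `M_n(φ) ⪰ 0`, so
`φ_α² ≤ φ_{2β} φ_{2γ}`, and `M_n(φ) ⪯ M_n(μ)` gives `0 ≤ φ_{2β} ≤ μ_{2β}`. By weighted AM–GM,
`x^{2β} ≤ (1 - |β|/n) + ∑ᵢ (βᵢ/n) xᵢ^{2n}`, so `μ_{2β}` is at most a convex combination of
`μ(ℝ^d)` and the `∫ xᵢ^{2n} dμ`, hence at most their maximum.
-/

namespace Matrix.PosSemidef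

variable {m : Type*} {A : Matrix m m ℝ}

theorem apply_sq_le_mul (hA : A.PosSemidef) (a b : m) : A a b ^ 2 ≤ A a a * A b b := by
  classical
  have hdet := (hA.submatrix ![a, b]).det_nonneg
  have hsymm : A b a = A a b := by simpa using hA.isHermitian.apply a b
  simp only [det_fin_two, submatrix_apply, cons_val_zero, cons_val_one, hsymm] at hdet
  linarith

theorem abs_apply_le (hA : A.PosSemidef) {M : ℝ} (hM : ∀ c, A c c ≤ M) (a b : m) :
    |A a b| ≤ M := by
  have hM₀ : 0 ≤ M := hA.diag_nonneg.trans (hM a)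
  refine abs_le_of_sq_le_sq ((hA.apply_sq_le_mul a b).trans ?_) hM₀
  rw [sq]
  exact mul_le_mul (hM a) (hM b) hA.diag_nonneg hM₀

end Matrix.PosSemidef

theorem Finset.exists_le_sum_eq {ι : Type*} [DecidableEq ι] (α : ι → ℕ) (s : Finset ι) {m : ℕ}
    (hm : m ≤ ∑ i ∈ s, α i) : ∃ β ≤ α, ∑ i ∈ s, β i = m := by
  induction s using Finset.induction_on generalizing m with
  | empty => exact ⟨0, fun _ => Nat.zero_le _, by simpa [eq_comm] using hm⟩
  | insert a s ha ih =>
    rw [sum_insert ha] at hm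
    obtain ⟨β, hβα, hβ⟩ := ih (min_le_right m (∑ i ∈ s, α i))
    refine ⟨Function.update β a (m - min m (∑ i ∈ s, α i)), fun i => ?_, ?_⟩
    · rcases eq_or_ne i a with rfl | hi
      · simp only [Function.update_self]; omega
      · simpa [hi] using hβα i
    · rw [sum_insert ha, Function.update_self,
        sum_congr rfl fun i hi => Function.update_of_ne (ne_of_mem_of_not_mem hi ha) _ _, hβ]
      omega

theorem exists_add_eq_of_sum_le_add {ι : Type*} [Fintype ι] (α : ι → ℕ) {m k : ℕ}
    (h : ∑ i, α i ≤ m + k) : ∃ β γ : ι → ℕ, β + γ = α ∧ ∑ i, β i ≤ m ∧ ∑ i, γ i ≤ k := by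
  classical
  obtain ⟨β, hβα, hβ⟩ := Finset.exists_le_sum_eq α Finset.univ (min_le_right m (∑ i, α i))
  refine ⟨β, α - β, add_tsub_cancel_of_le hβα, hβ ▸ min_le_left _ _, ?_⟩
  rw [Pi.sub_def, sum_tsub_distrib _ fun i _ => hβα i, hβ]
  omega

namespace Real

theorem geom_mean_le_one_sub_add_arith_mean_weighted {ι : Type*} (s : Finset ι) (w z : ι → ℝ)
    (hw : ∀ i ∈ s, 0 ≤ w i) (hw' : ∑ i ∈ s, w i ≤ 1) (hz : ∀ i ∈ s, 0 ≤ z i) :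
    ∏ i ∈ s, z i ^ w i ≤ (1 - ∑ i ∈ s, w i) + ∑ i ∈ s, w i * z i := by
  have h := geom_mean_le_arith_mean_weighted s.insertNone (Option.elim · (1 - ∑ i ∈ s, w i) w)
    (Option.elim · 1 z) (forall_mem_insertNone.2 ⟨sub_nonneg.2 hw', hw⟩)
    (by simp [Finset.sum_insertNone]) (forall_mem_insertNone.2 ⟨zero_le_one, hz⟩)
  simpa [Finset.prod_insertNone, Finset.sum_insertNone] using h

theorem pow_two_mul_rpow_div {k n : ℕ} (x : ℝ) (hkn : k ≤ n) :
    (x ^ (2 * n)) ^ ((k : ℝ) / n) = x ^ (2 * k) := by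
  rcases Nat.eq_zero_or_pos n with rfl | hn
  · simp [Nat.le_zero.mp hkn]
  rw [pow_mul, pow_mul, ← rpow_natCast (x ^ 2), ← rpow_mul (sq_nonneg x),
    mul_div_cancel₀ _ (by positivity), rpow_natCast]

end Real

theorem one_sub_sum_mul_add_sum_mul_le {ι : Type*} (s : Finset ι) {w b : ι → ℝ} {a M : ℝ}
    (hw : ∀ i ∈ s, 0 ≤ w i) (hw' : ∑ i ∈ s, w i ≤ 1) (ha : a ≤ M) (hb : ∀ i ∈ s, b i ≤ M) :
    (1 - ∑ i ∈ s, w i) * a + ∑ i ∈ s, w i * b i ≤ M := calc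
  _ ≤ (1 - ∑ i ∈ s, w i) * M + ∑ i ∈ s, w i * M :=
    add_le_add (mul_le_mul_of_nonneg_left ha (sub_nonneg.2 hw'))
      (sum_le_sum fun i hi => mul_le_mul_of_nonneg_left (hb i hi) (hw i hi))
  _ = M := by rw [← Finset.sum_mul]; ring

theorem mono_single {d : ℕ} (i : Fin d) (k : ℕ) : mono d (Pi.single i k) = fun x => x i ^ k := by
  funext x
  rw [mono, prod_eq_single i (fun j _ hj => by simp [hj]) (by simp)]
  simp

theorem HasAllMoments.integrable_pow_apply {d : ℕ} {μ : Measure (Fin d → ℝ)}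
    (hμ : HasAllMoments μ) (i : Fin d) (k : ℕ) : Integrable (fun x => x i ^ k) μ :=
  mono_single i k ▸ hμ _

theorem sum_cast_div_le_one {ι : Type*} [Fintype ι] {β : ι → ℕ} {n : ℕ} (hβ : ∑ i, β i ≤ n) :
    ∑ i, (β i : ℝ) / n ≤ 1 := by
  rw [← sum_div]
  exact div_le_one_of_le₀ (by exact_mod_cast hβ) n.cast_nonneg

-- For `n = 0` the weights `β i / n` are `0 / 0 = 0`, consistent with `β = 0`.
theorem mono_add_self_le {d n : ℕ} {β : Fin d → ℕ} (hβ : ∑ i, β i ≤ n) (x : Fin d → ℝ) :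
    mono d (β + β) x ≤ (1 - ∑ i, (β i : ℝ) / n) + ∑ i, (β i : ℝ) / n * x i ^ (2 * n) := calc
  mono d (β + β) x = ∏ i, (x i ^ (2 * n)) ^ ((β i : ℝ) / n) := by
    refine prod_congr rfl fun i _ => ?_
    have hβi : β i ≤ n := (single_le_sum (fun j _ => Nat.zero_le (β j)) (mem_univ i)).trans hβ
    rw [Real.pow_two_mul_rpow_div _ hβi, Pi.add_apply, two_mul]
  _ ≤ _ := Real.geom_mean_le_one_sub_add_arith_mean_weighted _ _ _ (fun i _ => by positivity)
    (sum_cast_div_le_one hβ) (fun i _ => by rw [pow_mul]; positivity)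

theorem mMom_add_self_le_max {d n : ℕ} {μ : Measure (Fin d → ℝ)} [IsFiniteMeasure μ]
    (hμ : HasAllMoments μ) {β : Fin d → ℕ} (hβ : ∑ i, β i ≤ n) :
    mMom μ (β + β) ≤ max ((μ Set.univ).toReal) (⨆ i : Fin d, ∫ x, x i ^ (2 * n) ∂μ) := by
  have hint : ∀ i ∈ univ, Integrable (fun x : Fin d → ℝ => (β i : ℝ) / n * x i ^ (2 * n)) μ :=
    fun i _ => (hμ.integrable_pow_apply i _).const_mul _
  calc mMom μ (β + β)
      ≤ ∫ x, (1 - ∑ i, (β i : ℝ) / n) + ∑ i, (β i : ℝ) / n * x i ^ (2 * n) ∂μ :=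
        integral_mono (hμ _) ((integrable_const _).add (integrable_finsetSum _ hint))
          (mono_add_self_le hβ)
    _ = (1 - ∑ i, (β i : ℝ) / n) * (μ Set.univ).toReal
          + ∑ i, (β i : ℝ) / n * ∫ x, x i ^ (2 * n) ∂μ := by
        rw [integral_add (integrable_const _) (integrable_finsetSum _ hint), integral_const,
          integral_finsetSum _ hint, smul_eq_mul, mul_comm, measureReal_def]
        simp_rw [integral_const_mul]
    _ ≤ _ := one_sub_sum_mul_add_sum_mul_le _ (fun i _ => by positivity)
        (sum_cast_div_le_one hβ) (le_max_left _ _)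
        fun i _ => (le_ciSup (Set.finite_range fun i => ∫ x, x i ^ (2 * n) ∂μ).bddAbove i).trans
          (le_max_right _ _)

theorem pvMat_apply_self_le {d n : ℕ} {m : (Fin d → ℕ) → ℝ} {φ : PV d n}
    (h : (momMat d n m - pvMat d n φ).PosSemidef) (a : {α : Fin d → ℕ // ∑ i, α i ≤ n}) :
    pvMat d n φ a a ≤ m (a.1 + a.1) :=
  sub_nonneg.mp h.diag_nonneg

/-- If `φ` is a degree-`2n` pseudo-moment vector with
`0 ⪯ M_n(φ) ⪯ M_n(μ)`, then `|φ_α| ≤ max(μ(ℝ^d), max_i ∫ x_i^{2n} dμ)` for all `|α| ≤ 2n`. -/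
theorem pseudoMoment_bound (d n : ℕ) (μ : Measure (Fin d → ℝ)) [IsFiniteMeasure μ]
    (hμ : HasAllMoments μ) (φ : PV d n)
    (h0 : (pvMat d n φ).PosSemidef)
    (h1 : (momMat d n (mMom μ) - pvMat d n φ).PosSemidef) :
    ∀ α : {α : Fin d → ℕ // ∑ i, α i ≤ 2 * n},
      |φ α| ≤ max ((μ Set.univ).toReal) (⨆ i : Fin d, ∫ x, x i ^ (2 * n) ∂μ) := by
  intro α
  obtain ⟨β, γ, hα, hβ, hγ⟩ := exists_add_eq_of_sum_le_add α.1 (α.2.trans_eq (two_mul n))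
  have hφα : φ α = pvMat d n φ ⟨β, hβ⟩ ⟨γ, hγ⟩ := congrArg φ (Subtype.ext hα.symm)
  rw [hφα]
  exact h0.abs_apply_le (fun a => (pvMat_apply_self_le h1 a).trans (mMom_add_self_le_max hμ a.2))
    _ _

end
end

section
/- Let p be a monic real polynomial of degree m in one variable, and let σ and τ be finite signed Borel measures on ℝ with all moments finite such that ∫ x^k p(x) dσ(x) = 0 and ∫ x^k p(x) dτ(x) = 0 for every k ∈ ℕ, and ∫ x^k dσ = ∫ x^k dτ for every k = 0, 1, …, 2m. Then ∫ x^k dσ = ∫ x^k dτ for every k ∈ ℕ. -/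
/-!
A monic `p = X^m + ∑_{i<m} c_i X^i` is the characteristic polynomial of the linear recurrence
`u (n + m) = -∑_{i<m} c_i u (n + i)`. The hypothesis `∫ x^n p dν = 0` says precisely that the
moment sequence of `ν` solves this recurrence, so the moments of `σ` and `τ` are two solutions
of one recurrence of order `m`; agreeing on their first `m` terms, they agree everywhere.
-/

open MeasureTheory Finset Filter

noncomputable section

/-- Integral of `f` against a (finite) signed measure `σ`, via its Jordan decomposition. -/
def sInt (σ : SignedMeasure ℝ) (f : ℝ → ℝ) : ℝ :=
  ∫ x, f x ∂σ.toJordanDecomposition.posPart - ∫ x, f x ∂σ.toJordanDecomposition.negPart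

namespace Polynomial

variable {R : Type*} [CommRing R]

def linearRecurrence (p : R[X]) : LinearRecurrence R :=
  ⟨p.natDegree, fun i => -p.coeff i⟩

theorem Monic.isSolution_linearRecurrence {p : R[X]} (hp : p.Monic) {u : ℕ → R}
    (hu : ∀ n, ∑ i ∈ range (p.natDegree + 1), p.coeff i * u (n + i) = 0) :
    p.linearRecurrence.IsSolution u := by
  intro n
  have h := hu n
  rw [sum_range_succ, hp.coeff_natDegree, one_mul] at h
  change u (n + p.natDegree) = ∑ i : Fin p.natDegree, -p.coeff i * u (n + i)
  rw [Fin.sum_univ_eq_sum_range (fun i => -p.coeff i * u (n + i))]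
  simp only [neg_mul, sum_neg_distrib]
  exact eq_neg_of_add_eq_zero_right h

end Polynomial

namespace MeasureTheory.SignedMeasure

variable (σ : SignedMeasure ℝ)

theorem sInt_const_mul (c : ℝ) (f : ℝ → ℝ) : sInt σ (fun x => c * f x) = c * sInt σ f := by
  simp only [sInt, integral_const_mul, mul_sub]

theorem sInt_finset_sum {ι : Type*} (s : Finset ι) {f : ι → ℝ → ℝ}
    (hf : ∀ i ∈ s, Integrable (f i) σ.totalVariation) :
    sInt σ (fun x => ∑ i ∈ s, f i x) = ∑ i ∈ s, sInt σ (f i) := by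
  rw [sInt, integral_finsetSum s fun i hi => (hf i hi).left_of_add_measure,
    integral_finsetSum s fun i hi => (hf i hi).right_of_add_measure, ← sum_sub_distrib]
  rfl

variable {σ}

theorem sInt_pow_mul_eval (hσ : ∀ k : ℕ, Integrable (fun x : ℝ => x ^ k) σ.totalVariation)
    (p : Polynomial ℝ) (n : ℕ) :
    sInt σ (fun x => x ^ n * p.eval x) =
      ∑ i ∈ range (p.natDegree + 1), p.coeff i * sInt σ (fun x => x ^ (n + i)) := by
  have hexpand : (fun x : ℝ => x ^ n * p.eval x) =
      fun x => ∑ i ∈ range (p.natDegree + 1), p.coeff i * x ^ (n + i) := by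
    funext x
    rw [Polynomial.eval_eq_sum_range, mul_sum]
    exact sum_congr rfl fun i _ => by ring
  rw [hexpand, sInt_finset_sum σ _ fun i _ => (hσ (n + i)).const_mul (p.coeff i)]
  exact sum_congr rfl fun i _ => sInt_const_mul σ _ _

theorem isSolution_moments {p : Polynomial ℝ} (hp : p.Monic)
    (hσ : ∀ k : ℕ, Integrable (fun x : ℝ => x ^ k) σ.totalVariation)
    (hp_ortho : ∀ k : ℕ, sInt σ (fun x => x ^ k * p.eval x) = 0) :
    p.linearRecurrence.IsSolution fun k => sInt σ (fun x => x ^ k) :=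
  hp.isSolution_linearRecurrence fun n => by rw [← sInt_pow_mul_eval hσ, hp_ortho]

end MeasureTheory.SignedMeasure

open SignedMeasure in
/-- If `p` is a monic polynomial of degree `m` and `σ, τ` are finite signed
measures on `ℝ` with all moments finite such that `∫ x^k p dσ = ∫ x^k p dτ = 0` for all
`k`, and `σ` and `τ` have the same moments up to degree `2m`, then they have the same
moments of every degree. -/
theorem moments_eq_of_eq_up_to_two_deg (m : ℕ) (p : Polynomial ℝ)
    (hmonic : p.Monic) (hdeg : p.natDegree = m)
    (σ τ : SignedMeasure ℝ)
    (hσint : ∀ k : ℕ, Integrable (fun x : ℝ => x ^ k) σ.totalVariation)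
    (hτint : ∀ k : ℕ, Integrable (fun x : ℝ => x ^ k) τ.totalVariation)
    (hσ : ∀ k : ℕ, sInt σ (fun x => x ^ k * p.eval x) = 0)
    (hτ : ∀ k : ℕ, sInt τ (fun x => x ^ k * p.eval x) = 0)
    (heq : ∀ k : ℕ, k ≤ 2 * m → sInt σ (fun x => x ^ k) = sInt τ (fun x => x ^ k)) :
    ∀ k : ℕ, sInt σ (fun x => x ^ k) = sInt τ (fun x => x ^ k) := by
  have hinit : Set.EqOn (fun k => sInt σ (fun x => x ^ k)) (fun k => sInt τ (fun x => x ^ k))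
      (range p.linearRecurrence.order) := fun k hk =>
    heq k (by simp only [coe_range, Set.mem_Iio] at hk; change k < p.natDegree at hk; omega)
  exact congrFun ((p.linearRecurrence.eq_iff_eqOn_range_order _ _
    (isSolution_moments hmonic hσint hσ) (isSolution_moments hmonic hτint hτ)).2 hinit)

end
end

section
/- Let μ be a finite positive Borel measure on ℝ supported on a set X of exactly m distinct points, let p(x) = ∏_{x' ∈ X} (x − x') with coefficient vector p ∈ ℝ^{m+1} in the monomial basis, and let φ = (φ_k)_{0 ≤ k ≤ 2m} be a degree-2m pseudo-moment vector with 0 ⪯ M_m(φ) ⪯ M_m(μ). Then M_m(φ) p = 0 and rank M_m(φ) = rank M_{m−1}(φ), where M_{m−1}(φ) is the upper-left m×m principal submatrix of M_m(φ). -/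
open MeasureTheory Finset Filter

noncomputable section

/-- The `k`-th moment `μ_k = ∫ x^k dμ` of a measure on `ℝ`. -/
def uMom (μ : Measure ℝ) (k : ℕ) : ℝ := ∫ x, x ^ k ∂μ

/-- The `(n+1) × (n+1)` Hankel moment matrix built from a moment function `m`. -/
def hMat (n : ℕ) (m : ℕ → ℝ) : Matrix (Fin (n + 1)) (Fin (n + 1)) ℝ :=
  fun i j => m (i.1 + j.1)

/-- Degree-`2n` pseudo-moment vectors (univariate). -/
abbrev uPV (n : ℕ) := Fin (2 * n + 1) → ℝ

/-- Hankel moment matrix of a degree-`2n` pseudo-moment vector. -/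
def uPMat (n : ℕ) (φ : uPV n) : Matrix (Fin (n + 1)) (Fin (n + 1)) ℝ :=
  fun i j => φ ⟨i.1 + j.1, by have hi := i.2; have hj := j.2; omega⟩

/-- Feasibility for the level-`n` semidefinite relaxation (univariate). -/
def uFeas (n : ℕ) (μ ν : Measure ℝ) (φ ψ : uPV n) : Prop :=
  (∀ k : Fin (2 * n + 1), φ k - ψ k = uMom μ k.1 - uMom ν k.1) ∧
  (uPMat n φ).PosSemidef ∧ (hMat n (uMom μ) - uPMat n φ).PosSemidef ∧
  (uPMat n ψ).PosSemidef ∧ (hMat n (uMom ν) - uPMat n ψ).PosSemidef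

/-- The optimal value `ρ_n` of the level-`n` semidefinite relaxation (univariate). -/
def uRho (n : ℕ) (μ ν : Measure ℝ) : ℝ :=
  sInf {r : ℝ | ∃ φ ψ : uPV n, uFeas n μ ν φ ψ ∧ r = φ 0 + ψ 0}

/-- Total variation distance `‖μ - ν‖_TV` of two finite measures on `ℝ`. -/
def uTV (μ ν : Measure ℝ) [IsFiniteMeasure μ] [IsFiniteMeasure ν] : ℝ :=
  ((μ.toSignedMeasure - ν.toSignedMeasure).toJordanDecomposition.posPart Set.univ
    + (μ.toSignedMeasure - ν.toSignedMeasure).toJordanDecomposition.negPart Set.univ).toReal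


/-! If `p` vanishes on `X ⊇ supp μ`, the Gram form `pᵀ M_m(μ) p = ∫ p² dμ` is zero, so the
sandwich `0 ⪯ M_m(φ) ⪯ M_m(μ)` forces `pᵀ M_m(φ) p = 0` and hence `M_m(φ) p = 0`. Since `p` is
monic of degree `m`, this kernel vector expresses the last column of the symmetric matrix
`M_m(φ)` through the others, and likewise its last row, so deleting both keeps the rank. -/

open Matrix

namespace Matrix

section Rank

variable {K : Type*} [Field K] {n : ℕ}

theorem rank_submatrix_id_castSucc_of_mulVec_eq_zero {ι : Type*} [Fintype ι]
    (B : Matrix ι (Fin (n + 1)) K) {v : Fin (n + 1) → K} (hv : B *ᵥ v = 0)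
    (hlast : v (Fin.last n) ≠ 0) :
    (B.submatrix id Fin.castSucc).rank = B.rank := by
  have mulVec_of_last_eq_zero : ∀ y : Fin (n + 1) → K, y (Fin.last n) = 0 →
      B *ᵥ y = B.submatrix id Fin.castSucc *ᵥ (y ∘ Fin.castSucc) := by
    intro y hy
    ext i
    simp [mulVec, dotProduct, Fin.sum_univ_castSucc, hy]
  suffices LinearMap.range (B.submatrix id Fin.castSucc).mulVecLin
      = LinearMap.range B.mulVecLin by
    rw [rank, rank, this]
  apply le_antisymm
  · rintro w ⟨z, rfl⟩
    refine ⟨Fin.snoc z 0, ?_⟩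
    simp [mulVec_of_last_eq_zero _ (Fin.snoc_last _ _)]
  · rintro w ⟨x, rfl⟩
    refine ⟨(x - (x (Fin.last n) / v (Fin.last n)) • v) ∘ Fin.castSucc, ?_⟩
    rw [mulVecLin_apply, mulVecLin_apply, ← mulVec_of_last_eq_zero _ (by simp [hlast]),
      mulVec_sub, mulVec_smul, hv, smul_zero, sub_zero]

theorem IsSymm.rank_submatrix_castSucc_of_mulVec_eq_zero
    {A : Matrix (Fin (n + 1)) (Fin (n + 1)) K} (hA : A.IsSymm) {v : Fin (n + 1) → K}
    (hv : A *ᵥ v = 0) (hlast : v (Fin.last n) ≠ 0) :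
    (A.submatrix Fin.castSucc Fin.castSucc).rank = A.rank := by
  have hv' : A.submatrix Fin.castSucc id *ᵥ v = 0 := by
    ext i
    simpa [mulVec, dotProduct] using congrFun hv (Fin.castSucc i)
  calc (A.submatrix Fin.castSucc Fin.castSucc).rank
      = ((A.submatrix Fin.castSucc id).submatrix id Fin.castSucc).rank := by
        rw [submatrix_submatrix]; rfl
    _ = (A.submatrix Fin.castSucc id).rank :=
        rank_submatrix_id_castSucc_of_mulVec_eq_zero _ hv' hlast
    _ = (A.submatrix id Fin.castSucc).rank := by
        rw [← rank_transpose, transpose_submatrix, hA.eq]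
    _ = A.rank := rank_submatrix_id_castSucc_of_mulVec_eq_zero A hv hlast

end Rank

open scoped ComplexOrder in
theorem PosSemidef.mulVec_eq_zero_of_sub_posSemidef {𝕜 ι : Type*} [RCLike 𝕜] [Fintype ι]
    {A B : Matrix ι ι 𝕜} (hA : A.PosSemidef) (hBA : (B - A).PosSemidef) {x : ι → 𝕜}
    (hx : star x ⬝ᵥ B *ᵥ x = 0) : A *ᵥ x = 0 := by
  refine (hA.dotProduct_mulVec_zero_iff x).mp (le_antisymm ?_ (hA.dotProduct_mulVec_nonneg x))
  have h := hBA.dotProduct_mulVec_nonneg x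
  rwa [sub_mulVec, dotProduct_sub, hx, zero_sub, neg_nonneg] at h

end Matrix

theorem integrable_of_ae_mem_finset {α E : Type*} [MeasurableSpace α] [NormedAddCommGroup E]
    {μ : Measure α} [IsFiniteMeasure μ] {X : Finset α} (hX : ∀ᵐ x ∂μ, x ∈ X) {f : α → E}
    (hf : AEStronglyMeasurable f μ) : Integrable f μ :=
  (integrable_const (∑ x ∈ X, ‖f x‖)).mono' hf <| by
    filter_upwards [hX] with x hx
    exact single_le_sum (f := fun x => ‖f x‖) (fun _ _ => norm_nonneg _) hx

theorem dotProduct_hMat_uMom_mulVec {μ : Measure ℝ}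
    (hint : ∀ k, Integrable (fun x : ℝ => x ^ k) μ) {n : ℕ} (c : Fin (n + 1) → ℝ) :
    c ⬝ᵥ hMat n (uMom μ) *ᵥ c = ∫ x, (∑ i, c i * x ^ (i : ℕ)) ^ 2 ∂μ := by
  have hint' (i j : Fin (n + 1)) : Integrable (fun x => c i * c j * x ^ (i + j : ℕ)) μ :=
    (hint _).const_mul _
  calc c ⬝ᵥ hMat n (uMom μ) *ᵥ c = ∑ i, ∑ j, ∫ x, c i * c j * x ^ (i + j : ℕ) ∂μ := by
        simp only [dotProduct, mulVec, hMat, uMom, mul_sum, integral_const_mul]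
        exact sum_congr rfl fun i _ => sum_congr rfl fun j _ => by ring
    _ = ∫ x, ∑ i, ∑ j, c i * c j * x ^ (i + j : ℕ) ∂μ := by
        rw [integral_finsetSum _ fun i _ => integrable_finsetSum _ fun j _ => hint' i j]
        exact sum_congr rfl fun i _ => (integral_finsetSum _ fun j _ => hint' i j).symm
    _ = ∫ x, (∑ i, c i * x ^ (i : ℕ)) ^ 2 ∂μ := by
        congr 1
        ext x
        rw [sq, sum_mul_sum]
        exact sum_congr rfl fun i _ => sum_congr rfl fun j _ => by ring

open Matrix in
theorem kernel_and_flat_rank_general (m : ℕ) (μ : Measure ℝ) [IsFiniteMeasure μ]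
    (X : Finset ℝ) (hcard : X.card = m)
    (hsupp : μ (↑X : Set ℝ)ᶜ = 0)
    (φ : uPV m)
    (h0 : (uPMat m φ).PosSemidef)
    (h1 : (hMat m (uMom μ) - uPMat m φ).PosSemidef) :
    (uPMat m φ).mulVec
        (fun i : Fin (m + 1) => (∏ x' ∈ X, (Polynomial.X - Polynomial.C x')).coeff i.1) = 0 ∧
    (uPMat m φ).rank =
      ((uPMat m φ).submatrix (Fin.castSucc : Fin m → Fin (m + 1)) Fin.castSucc).rank := by
  set P : Polynomial ℝ := ∏ x' ∈ X, (Polynomial.X - Polynomial.C x')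
  have hmonic : P.Monic := Polynomial.monic_prod_of_monic _ _ fun x _ => Polynomial.monic_X_sub_C x
  have hdeg : P.natDegree = m := by
    rw [Polynomial.natDegree_prod_of_monic _ _ fun x _ => Polynomial.monic_X_sub_C x]
    simp [hcard]
  have hae : ∀ᵐ x ∂μ, x ∈ X := ae_iff.mpr hsupp
  set p : Fin (m + 1) → ℝ := fun i => P.coeff i
  have hroots (x : ℝ) (hx : x ∈ X) : ∑ i, p i * x ^ (i : ℕ) = 0 := by
    rw [Fin.sum_univ_eq_sum_range (fun i => P.coeff i * x ^ i),
      ← Polynomial.eval_eq_sum_range' (by omega), Polynomial.eval_prod]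
    exact prod_eq_zero hx (by simp)
  have hquad : star p ⬝ᵥ hMat m (uMom μ) *ᵥ p = 0 := by
    rw [star_trivial, dotProduct_hMat_uMom_mulVec
      (fun k => integrable_of_ae_mem_finset hae (by fun_prop))]
    refine integral_eq_zero_of_ae ?_
    filter_upwards [hae] with x hx
    simp [hroots x hx]
  have hker := h0.mulVec_eq_zero_of_sub_posSemidef h1 hquad
  refine ⟨hker, (IsSymm.rank_submatrix_castSucc_of_mulVec_eq_zero
    (isHermitian_iff_isSymm.mp h0.isHermitian) hker ?_).symm⟩
  simp [p, ← hdeg, hmonic.coeff_natDegree]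

/-- If `μ` is a finite measure on `ℝ` supported on a set `X` of exactly `m`
points, `p = ∏_{x' ∈ X} (X - x')` with coefficient vector `p ∈ ℝ^{m+1}`, and `φ` is a
degree-`2m` pseudo-moment vector with `0 ⪯ M_m(φ) ⪯ M_m(μ)`, then `M_m(φ) p = 0` and
`rank M_m(φ) = rank M_{m-1}(φ)`. -/
theorem kernel_and_flat_rank (m : ℕ) (μ : Measure ℝ) [IsFiniteMeasure μ]
    (X : Finset ℝ) (hcard : X.card = m)
    (hsupp : μ (↑X : Set ℝ)ᶜ = 0) (hpos : ∀ x ∈ X, μ {x} ≠ 0)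
    (φ : uPV m)
    (h0 : (uPMat m φ).PosSemidef)
    (h1 : (hMat m (uMom μ) - uPMat m φ).PosSemidef) :
    (uPMat m φ).mulVec
        (fun i : Fin (m + 1) => (∏ x' ∈ X, (Polynomial.X - Polynomial.C x')).coeff i.1) = 0 ∧
    (uPMat m φ).rank =
      ((uPMat m φ).submatrix (Fin.castSucc : Fin m → Fin (m + 1)) Fin.castSucc).rank :=
  kernel_and_flat_rank_general m μ X hcard hsupp φ h0 h1
end
end

section
/- Let x(1), …, x(m) be distinct real numbers, let μ = Σ_{i=1}^m a_i δ_{x(i)} with a_i > 0 and φ = Σ_{i=1}^m a'_i δ_{x(i)} with a'_i ≥ 0, and let n ≥ m − 1. If M_n(φ) ⪯ M_n(μ), then a'_i ≤ a_i for every i = 1, …, m; in particular φ ≤ μ. -/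
open MeasureTheory Finset Filter

noncomputable section

/-!
The quadratic form of the Hankel matrix of `∑ c_l δ_{x_l}` at a coefficient vector `v` is
`∑ c_l p(x_l)²`, where `p = ∑ v_j X^j`. For `c = a - a'`, evaluate it at the coefficients of the
Lagrange basis polynomial of the node `x_i`: this polynomial has degree `m - 1 ≤ n` and takes
the value `1` at `x_i` and `0` at the other nodes, so positive semidefiniteness gives
`a_i - a'_i ≥ 0`.
-/

open Matrix Polynomial

theorem integral_sum_smul_dirac {α ι : Type*} [MeasurableSpace α] [MeasurableSingletonClass α]
    [Fintype ι] {c : ι → ℝ} (hc : ∀ i, 0 ≤ c i) (x : ι → α) (f : α → ℝ) :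
    ∫ t, f t ∂(∑ i, ENNReal.ofReal (c i) • Measure.dirac (x i)) = ∑ i, c i * f (x i) := by
  rw [integral_finsetSum_measure fun i _ =>
    (integrable_dirac enorm_lt_top).smul_measure ENNReal.ofReal_ne_top]
  refine Finset.sum_congr rfl fun i _ => ?_
  rw [integral_smul_measure, integral_dirac, ENNReal.toReal_ofReal (hc i), smul_eq_mul]

theorem dotProduct_hMat_mulVec {ι : Type*} [Fintype ι] (n : ℕ) (c x : ι → ℝ)
    (v : Fin (n + 1) → ℝ) :
    v ⬝ᵥ hMat n (fun k => ∑ l, c l * x l ^ k) *ᵥ v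
      = ∑ l, c l * (∑ j, v j * x l ^ (j : ℕ)) ^ 2 := by
  have hsq : ∀ l, c l * (∑ j, v j * x l ^ (j : ℕ)) ^ 2
      = ∑ i : Fin (n + 1), ∑ j : Fin (n + 1), v i * (c l * x l ^ (i + j : ℕ) * v j) := by
    intro l
    rw [sq, Finset.sum_mul_sum, Finset.mul_sum]
    exact sum_congr rfl fun i _ => by rw [Finset.mul_sum]; exact sum_congr rfl fun j _ => by ring
  simp only [hsq, dotProduct, mulVec, hMat, Finset.mul_sum, Finset.sum_mul]
  exact (sum_congr rfl fun i _ => Finset.sum_comm).trans Finset.sum_comm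

theorem exists_sum_mul_pow_eq_single {F ι : Type*} [Field F] [Fintype ι] [DecidableEq ι]
    {x : ι → F} (hx : Function.Injective x) {n : ℕ} (hn : Fintype.card ι - 1 ≤ n) (i : ι) :
    ∃ v : Fin (n + 1) → F, ∀ l, ∑ j, v j * x l ^ (j : ℕ) = (Pi.single i 1 : ι → F) l := by
  set p := Lagrange.basis univ x i
  have hdeg : p.natDegree < n + 1 := by
    rw [Lagrange.natDegree_basis hx.injOn (mem_univ i), card_univ]
    omega
  refine ⟨fun j => p.coeff j, fun l => ?_⟩
  rw [Fin.sum_univ_eq_sum_range (fun j => p.coeff j * x l ^ j), ← eval_eq_sum_range' hdeg]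
  rcases eq_or_ne l i with rfl | hl
  · rw [Lagrange.eval_basis_self hx.injOn (mem_univ l), Pi.single_eq_same]
  · rw [Lagrange.eval_basis_of_ne hl.symm (mem_univ l), Pi.single_eq_of_ne hl]

theorem nonneg_of_posSemidef_hMat {ι : Type*} [Fintype ι] {n : ℕ} (hn : Fintype.card ι - 1 ≤ n)
    {x : ι → ℝ} (hx : Function.Injective x) {c : ι → ℝ}
    (h : (hMat n fun k => ∑ l, c l * x l ^ k).PosSemidef) (i : ι) : 0 ≤ c i := by
  classical
  obtain ⟨v, hv⟩ := exists_sum_mul_pow_eq_single hx hn i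
  have hform := h.dotProduct_mulVec_nonneg v
  rw [star_trivial, dotProduct_hMat_mulVec] at hform
  simpa [hv, Pi.single_apply] using hform

/-- Let `μ = Σ a_i δ_{x_i}` with `a_i > 0` and `φ = Σ a'_i δ_{x_i}` with
`a'_i ≥ 0`, the `x_i` distinct, and `n ≥ m - 1`. If `M_n(φ) ⪯ M_n(μ)` then `a'_i ≤ a_i`
for every `i`; in particular `φ ≤ μ`. -/
theorem atomic_momentMatrix_domination (m n : ℕ) (hn : m - 1 ≤ n)
    (x : Fin m → ℝ) (hx : Function.Injective x)
    (a a' : Fin m → ℝ) (ha : ∀ i, 0 < a i) (ha' : ∀ i, 0 ≤ a' i)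
    (μ φ : Measure ℝ)
    (hμ : μ = ∑ i : Fin m, (ENNReal.ofReal (a i)) • Measure.dirac (x i))
    (hφ : φ = ∑ i : Fin m, (ENNReal.ofReal (a' i)) • Measure.dirac (x i))
    (hM : (hMat n (uMom μ) - hMat n (uMom φ)).PosSemidef) :
    (∀ i, a' i ≤ a i) ∧ φ ≤ μ := by
  have hdiff : hMat n (uMom μ) - hMat n (uMom φ)
      = hMat n fun k => ∑ l, (a l - a' l) * x l ^ k := by
    ext i j
    rw [Matrix.sub_apply, hMat, hMat, hMat, uMom, uMom, hμ, hφ,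
      integral_sum_smul_dirac (fun l => (ha l).le), integral_sum_smul_dirac ha',
      ← Finset.sum_sub_distrib]
    simp only [sub_mul]
  have hle : ∀ i, a' i ≤ a i := fun i =>
    sub_nonneg.1 (nonneg_of_posSemidef_hMat (by simpa using hn) hx (hdiff ▸ hM) i)
  refine ⟨hle, ?_⟩
  rw [hμ, hφ]
  exact Finset.sum_le_sum fun i _ =>
    IsOrderedSMul.smul_le_smul_right _ _ (ENNReal.ofReal_le_ofReal (hle i)) _

end
end
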